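/- Let l be a prime, let A be a commutative Artinian local ring with maximal ideal 𝔪 whose residue field F has characteristic l, let q ≥ 2 be an integer not divisible by l, let f, n ≥ 1 be integers with v_l(q^f − 1) > v_l(n!), where v_l denotes the l-adic valuation, and let n = n₁ + ⋯ + n_r be a partition of n into positive integers. Let Σ, Φ ∈ GL_n(A) satisfy Φ Σ Φ⁻¹ = Σ^q. Assume: (i) the entrywise reduction of Σ is the block diagonal matrix with diagonal blocks the Jordan blocks J_{n₁}(1), …, J_{n_r}(1); (ii) Φ is block diagonal with diagonal blocks Φ₁, …, Φ_r; and (iii) the characteristic polynomials of the reductions (Φ̄₁)^f, …, (Φ̄_r)^f are pairwise coprime in F[X]. Then Σ is block diagonal. -/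

import Mathlib

/-!
Write `Σ = D + E` with `D` the block-diagonal and `E` the off-diagonal part, and show that the
entries of `E` lie in every power of the nilpotent ideal `𝔪`. For the step from `𝔪 ^ j` to
`𝔪 ^ (j + 1)`, pass to `A ⧸ 𝔪 ^ (j + 1)`, where `𝔪 E = 0` and `E X E = 0` for every `X`. There
`D` may be replaced by the unipotent Jordan matrix `J = 1 + W` in every term linear in `E`, so
`Σ ^ M = D ^ M + (J + E) ^ M - J ^ M` for `M = q ^ f`. Expanding `(1 + (W + E)) ^ M`
binomially, the term `k = 1` is `M E = E` and the terms `2 ≤ k ≤ n` are killed by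
`l ∣ C(M, k)` (this is what `v_l(q ^ f - 1) > v_l(n!)` gives), while the part of `(W + E) ^ k`
linear in `E` vanishes for `k > n` because the blocks of `W` are nilpotent. Hence
`Σ ^ M = D ^ M + E`, and the `(i, j)` block of `Φ ^ f Σ = Σ ^ M Φ ^ f` reads
`Φᵢ ^ f Eᵢⱼ = Eᵢⱼ Φⱼ ^ f`. The characteristic polynomials of `Φᵢ ^ f` and `Φⱼ ^ f` are coprime
over `A` (coprimality lifts along the nilpotent `𝔪`), which forces `Eᵢⱼ = 0`.
-/

open IsLocalRing

section

open Matrix Polynomial Finset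
open scoped Nat

theorem Nat.Prime.dvd_choose_of_padicValNat_factorial_lt {l M N k : ℕ} (hl : l.Prime)
    (h : padicValNat l N ! < padicValNat l (M - 1)) (hk : 2 ≤ k) (hkN : k ≤ N) :
    l ∣ M.choose k := by
  have := Fact.mk hl
  have hM : 2 ≤ M := by
    by_contra hM
    simp [show M - 1 = 0 by omega] at h
  obtain ⟨a, rfl⟩ : ∃ a, M = a + 2 := ⟨M - 2, by omega⟩
  obtain ⟨b, rfl⟩ : ∃ b, k = b + 2 := ⟨k - 2, by omega⟩
  by_contra hC
  have hprod :
      (a + 2).choose (b + 2) * ((b + 2) * (b + 1)) = (a + 2) * ((a + 1) * a.choose b) := by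
    have e1 := Nat.add_one_mul_choose_eq (a + 1) (b + 1)
    have e2 := Nat.add_one_mul_choose_eq a b
    calc _ = (a + 1 + 1).choose (b + 1 + 1) * (b + 1 + 1) * (b + 1) := by ring
      _ = (a + 1 + 1) * ((a + 1).choose (b + 1) * (b + 1)) := by rw [← e1]; ring
      _ = _ := by rw [← e2]
  have hpow : l ^ (padicValNat l N ! + 1) ∣ a + 1 :=
    (padicValNat_dvd_iff_le (by omega)).mpr (by simpa using h)
  have hcop : Nat.Coprime (l ^ (padicValNat l N ! + 1)) ((a + 2).choose (b + 2)) :=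
    Nat.Coprime.pow_left _ ((Nat.Prime.coprime_iff_not_dvd hl).mpr hC)
  have hpow_dvd : l ^ (padicValNat l N ! + 1) ∣ (b + 2) * (b + 1) :=
    hcop.dvd_of_dvd_mul_left (hprod ▸ Dvd.dvd.mul_left (hpow.mul_right _) _)
  have hdvd_fact : (b + 2) * (b + 1) ∣ N ! :=
    Dvd.dvd.trans ⟨b !, by simp [Nat.factorial_succ]; ring⟩ (Nat.factorial_dvd_factorial hkN)
  have := (padicValNat_dvd_iff_le (Nat.factorial_ne_zero N)).mp (hpow_dvd.trans hdvd_fact)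
  omega

theorem SemiconjBy.pow_left_of_pow_right {G : Type*} [Monoid G] {a x : G} {q : ℕ}
    (h : SemiconjBy a x (x ^ q)) (k : ℕ) : SemiconjBy (a ^ k) x (x ^ q ^ k) := by
  induction k with
  | zero => simp [SemiconjBy.one_left]
  | succ k ih =>
    rw [pow_succ', pow_succ', pow_mul]
    exact (h.pow_right (q ^ k)).mul_left ih

section SquareZero

variable {R : Type*} [Semiring R] {a e y : R}

theorem add_pow_of_mul_mul_eq_zero (he : ∀ r, e * r * e = 0) (k : ℕ) :
    (a + e) ^ k = a ^ k + ∑ s ∈ range k, a ^ s * e * a ^ (k - 1 - s) := by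
  induction k with
  | zero => simp
  | succ k ih =>
    have hkill : e * (a ^ k + ∑ s ∈ range k, a ^ s * e * a ^ (k - 1 - s)) = e * a ^ k := by
      rw [mul_add, mul_sum, sum_eq_zero fun s _ => by rw [← mul_assoc, ← mul_assoc, he, zero_mul],
        add_zero]
    rw [pow_succ', ih, add_mul, hkill, sum_range_succ', mul_add, mul_sum]
    simp only [pow_succ', mul_assoc, Nat.add_sub_cancel, Nat.sub_zero, pow_zero, one_mul,
      Nat.sub_sub, add_comm 1]
    abel

theorem add_pow_mul_mul_add_pow (hye : ∀ r, y * r * e = 0) (hey : ∀ r, e * r * y = 0) (s t : ℕ) :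
    (a + y) ^ s * e * (a + y) ^ t = a ^ s * e * a ^ t := by
  have hleft : ∀ s, (a + y) ^ s * e = a ^ s * e := fun s => by
    induction s with
    | zero => simp
    | succ s ih => rw [pow_succ', mul_assoc, ih, add_mul, ← mul_assoc y, hye, add_zero,
        ← mul_assoc, ← pow_succ']
  have hright : ∀ t, e * (a + y) ^ t = e * a ^ t := fun t => by
    induction t with
    | zero => simp
    | succ t ih => rw [pow_succ, ← mul_assoc, ih, mul_add, hey, add_zero, mul_assoc, ← pow_succ]
  rw [hleft, mul_assoc, hright, ← mul_assoc]

theorem add_add_pow_add_pow (hee : ∀ r, e * r * e = 0) (hye : ∀ r, y * r * e = 0)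
    (hey : ∀ r, e * r * y = 0) (k : ℕ) :
    (a + y + e) ^ k + a ^ k = (a + y) ^ k + (a + e) ^ k := by
  rw [add_pow_of_mul_mul_eq_zero hee, add_pow_of_mul_mul_eq_zero hee,
    sum_congr rfl fun s _ => add_pow_mul_mul_add_pow hye hey s (k - 1 - s)]
  abel

end SquareZero

theorem Polynomial.isCoprime_of_isCoprime_map {R S : Type*} [CommRing R] [CommRing S]
    {f : R →+* S} (hf : Function.Surjective f) (hker : IsNilpotent (RingHom.ker f)) {p q : R[X]}
    (h : IsCoprime (p.map f) (q.map f)) : IsCoprime p q := by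
  obtain ⟨u, v, huv⟩ := h
  obtain ⟨U, rfl⟩ := map_surjective f hf u
  obtain ⟨V, rfl⟩ := map_surjective f hf v
  obtain ⟨k, hk⟩ := hker
  have hnil : IsNilpotent (U * p + V * q - 1) := Polynomial.isNilpotent_iff.mpr fun i => ⟨k, by
    have : (U * p + V * q - 1).coeff i ∈ RingHom.ker f := by
      simp only [RingHom.mem_ker, ← coeff_map, Polynomial.map_sub, Polynomial.map_add,
        Polynomial.map_mul, huv, Polynomial.map_one, sub_self, coeff_zero]
    simpa [hk] using Ideal.pow_mem_pow this k⟩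
  obtain ⟨w, hw⟩ := hnil.isUnit_one_add.exists_left_inv
  exact ⟨w * U, w * V, by linear_combination hw⟩

theorem IsLocalRing.natCast_mem_maximalIdeal_of_dvd {A : Type*} [CommRing A] [IsLocalRing A]
    {l : ℕ} [CharP (ResidueField A) l] {n : ℕ} (h : l ∣ n) : (n : A) ∈ maximalIdeal A := by
  rwa [← residue_eq_zero_iff, map_natCast, CharP.cast_eq_zero_iff (ResidueField A) l]

namespace Matrix

section Sylvester

variable {R : Type*} [CommRing R] {m n : Type*} [Fintype m] [DecidableEq m] [Fintype n]
  [DecidableEq n]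

theorem aeval_mul_eq_mul_aeval {X : Matrix m m R} {Y : Matrix n n R} {E : Matrix m n R}
    (h : X * E = E * Y) (p : R[X]) : aeval X p * E = E * aeval Y p := by
  induction p using Polynomial.induction_on' with
  | add p q hp hq => simp only [map_add, Matrix.add_mul, Matrix.mul_add, hp, hq]
  | monomial k c =>
    have hk : X ^ k * E = E * Y ^ k := by
      induction k with
      | zero => simp
      | succ k ih => rw [pow_succ, Matrix.mul_assoc, h, ← Matrix.mul_assoc, ih, Matrix.mul_assoc,
          pow_succ]
    simp [aeval_monomial, Algebra.algebraMap_eq_smul_one, hk]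

theorem eq_zero_of_mul_eq_mul_of_isCoprime_charpoly {X : Matrix m m R} {Y : Matrix n n R}
    {E : Matrix m n R} (hc : IsCoprime X.charpoly Y.charpoly) (h : X * E = E * Y) : E = 0 := by
  obtain ⟨u, v, huv⟩ := hc
  have hv : aeval X (v * Y.charpoly) = 1 := by
    simpa [aeval_self_charpoly] using congrArg (aeval X) huv
  calc E = aeval X (v * Y.charpoly) * E := by rw [hv, Matrix.one_mul]
    _ = aeval X v * (E * aeval Y Y.charpoly) := by
      rw [map_mul, Matrix.mul_assoc, aeval_mul_eq_mul_aeval h]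
    _ = 0 := by rw [aeval_self_charpoly, Matrix.mul_zero, Matrix.mul_zero]

end Sylvester

section JordanBlock

variable {R : Type*} [CommRing R]

variable (R) in
/-- `1 + nilpotentJordanBlock R n` is the Jordan block `J_n(1)`. -/
def nilpotentJordanBlock (n : ℕ) : Matrix (Fin n) (Fin n) R :=
  of fun a b => if (b : ℕ) = a + 1 then 1 else 0

theorem nilpotentJordanBlock_pow_self (n : ℕ) : nilpotentJordanBlock R n ^ n = 0 := by
  have h : (nilpotentJordanBlock R n).charpoly = X ^ n := by
    rw [charpoly_of_isUpperTriangular (nilpotentJordanBlock R n) fun a b (hba : b < a) =>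
      if_neg (by omega)]
    simp [nilpotentJordanBlock]
  simpa [h] using aeval_self_charpoly (nilpotentJordanBlock R n)

theorem blockDiagonal'_one_add_nilpotentJordanBlock_apply {o : Type*} [DecidableEq o] {n : o → ℕ}
    (x y : Σ i, Fin (n i)) :
    blockDiagonal' (fun i => 1 + nilpotentJordanBlock R (n i)) x y =
      if x.1 = y.1 ∧ ((y.2 : ℕ) = x.2 ∨ (y.2 : ℕ) = x.2 + 1) then 1 else 0 := by
  obtain ⟨i, a⟩ := x
  obtain ⟨j, b⟩ := y
  obtain rfl | hij := eq_or_ne i j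
  · simp [nilpotentJordanBlock, one_apply, Fin.ext_iff]
    split_ifs <;> simp_all
  · simp [blockDiagonal'_apply_ne _ _ _ hij, hij]

end JordanBlock

section IdealEntries

variable {R : Type*} [CommSemiring R] {l m n : Type*} {I K : Ideal R}

theorem mul_apply_mem_of_left [Fintype m] {X : Matrix l m R} (hX : ∀ a b, X a b ∈ I)
    (Y : Matrix m n R) (a : l) (b : n) : (X * Y) a b ∈ I :=
  sum_mem fun c _ => I.mul_mem_right _ (hX a c)

theorem mul_apply_mem_of_right [Fintype m] {X : Matrix m n R} (hX : ∀ a b, X a b ∈ I)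
    (Y : Matrix l m R) (a : l) (b : n) : (Y * X) a b ∈ I :=
  sum_mem fun c _ => I.mul_mem_left _ (hX c b)

theorem mul_mul_eq_zero_of_mul_eq_bot [Fintype m] {X : Matrix l m R} {Y : Matrix m n R}
    (hIK : I * K = ⊥) (hX : ∀ a b, X a b ∈ I) (hY : ∀ a b, Y a b ∈ K) (Z : Matrix m m R) :
    X * Z * Y = 0 := by
  ext a b
  have := sum_mem (t := univ) fun c _ =>
    Ideal.mul_mem_mul (mul_apply_mem_of_left hX Z a c) (hY c b)
  rwa [hIK, Ideal.mem_bot, ← mul_apply] at this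

theorem smul_eq_zero_of_mul_eq_bot {X : Matrix m n R} {c : R} (hKI : K * I = ⊥) (hc : c ∈ K)
    (hX : ∀ a b, X a b ∈ I) : c • X = 0 := by
  ext a b
  exact Ideal.mem_bot.mp (hKI ▸ Ideal.mul_mem_mul hc (hX a b))

end IdealEntries

section Blocks

variable {α : Type*} {o : Type*} [DecidableEq o] {m n p : o → Type*}

theorem submatrix_blockDiagonal'_mul [NonUnitalNonAssocSemiring α] [Fintype o] [∀ i, Fintype (n i)]
    (A : ∀ i, Matrix (m i) (n i) α) (X : Matrix (Σ i, n i) (Σ i, p i) α) (i j : o) :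
    (blockDiagonal' A * X).submatrix (Sigma.mk i) (Sigma.mk j) =
      A i * X.submatrix (Sigma.mk i) (Sigma.mk j) := by
  ext a b
  simp only [submatrix_apply, mul_apply, ← univ_sigma_univ, sum_sigma]
  rw [Fintype.sum_eq_single i fun k hk => sum_eq_zero fun c _ => by
    rw [blockDiagonal'_apply_ne _ _ _ hk.symm, zero_mul]]
  simp

theorem submatrix_mul_blockDiagonal' [NonUnitalNonAssocSemiring α] [Fintype o] [∀ i, Fintype (n i)]
    (X : Matrix (Σ i, m i) (Σ i, n i) α) (A : ∀ i, Matrix (n i) (p i) α) (i j : o) :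
    (X * blockDiagonal' A).submatrix (Sigma.mk i) (Sigma.mk j) =
      X.submatrix (Sigma.mk i) (Sigma.mk j) * A j := by
  ext a b
  simp only [submatrix_apply, mul_apply, ← univ_sigma_univ, sum_sigma]
  rw [Fintype.sum_eq_single j fun k hk => sum_eq_zero fun c _ => by
    rw [blockDiagonal'_apply_ne _ _ _ hk, mul_zero]]
  simp

theorem blockDiagonal'_blockDiag'_of_apply_eq_zero [Zero α] {X : Matrix (Σ i, m i) (Σ i, n i) α}
    (hX : ∀ x y, x.1 ≠ y.1 → X x y = 0) : blockDiagonal' (blockDiag' X) = X := by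
  ext ⟨i, a⟩ ⟨j, b⟩
  obtain rfl | hij := eq_or_ne i j
  · simp [blockDiag'_apply]
  · rw [blockDiagonal'_apply_ne _ _ _ hij, hX _ _ hij]

theorem blockDiagonal'_apply_of_ne [Zero α] (A : ∀ i, Matrix (m i) (n i) α) {x : Σ i, m i}
    {y : Σ i, n i} (h : x.1 ≠ y.1) : blockDiagonal' A x y = 0 :=
  dif_neg h

end Blocks

section Unipotent

variable {R : Type*} [CommRing R] {o : Type*} [Fintype o] [DecidableEq o] {m : o → Type*}
  [∀ i, Fintype (m i)] [∀ i, DecidableEq (m i)] {w : ∀ i, Matrix (m i) (m i) R} {d : o → ℕ}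

theorem blockDiagonal'_pow_mul_mul_pow_eq_zero (hw : ∀ i, w i ^ d i = 0)
    {E : Matrix (Σ i, m i) (Σ i, m i) R} (hE : blockDiag' E = 0) {s t : ℕ}
    (hst : ∀ i j, i ≠ j → d i + d j ≤ s + t) :
    blockDiagonal' w ^ s * E * blockDiagonal' w ^ t = 0 := by
  rw [← blockDiagonal'_pow, ← blockDiagonal'_pow]
  ext ⟨i, a⟩ ⟨j, b⟩
  have h := congr_fun₂ (submatrix_mul_blockDiagonal' (blockDiagonal' (w ^ s) * E) (w ^ t) i j) a b
  rw [submatrix_blockDiagonal'_mul] at h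
  simp only [submatrix_apply] at h
  rw [h, zero_apply]
  obtain rfl | hij := eq_or_ne i j
  · have : E.submatrix (Sigma.mk i) (Sigma.mk i) = 0 := congr_fun hE i
    simp [this]
  · rcases le_or_gt (d i) s with hs | hs
    · simp [pow_eq_zero_of_le hs (hw i)]
    · have := hst i j hij
      simp [pow_eq_zero_of_le (by omega : d j ≤ t) (hw j)]

theorem one_add_blockDiagonal'_add_pow {I K : Ideal R} (hIK : I ≤ K) (hKI : K * I = ⊥)
    (hw : ∀ i, w i ^ d i = 0) {N : ℕ} (hd : ∀ i j, i ≠ j → d i + d j ≤ N) {M : ℕ} (hM : 1 ≤ M)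
    (hM1 : ((M - 1 : ℕ) : R) ∈ K) (hMk : ∀ k, 2 ≤ k → k ≤ N → (M.choose k : R) ∈ K)
    {E : Matrix (Σ i, m i) (Σ i, m i) R} (hEI : ∀ x y, E x y ∈ I) (hE : blockDiag' E = 0) :
    (1 + blockDiagonal' w + E) ^ M = (1 + blockDiagonal' w) ^ M + E := by
  set W := blockDiagonal' w
  set F : ℕ → Matrix (Σ i, m i) (Σ i, m i) R := fun k => ∑ s ∈ range k, W ^ s * E * W ^ (k - 1 - s)
  have hEE : ∀ r, E * r * E = 0 :=
    mul_mul_eq_zero_of_mul_eq_bot (bot_unique (hKI ▸ Ideal.mul_mono_left hIK)) hEI hEI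
  have hFI : ∀ k x y, F k x y ∈ I := fun k x y => by
    simp only [F, sum_apply]
    exact sum_mem fun s _ => mul_apply_mem_of_left (mul_apply_mem_of_right hEI _) _ x y
  have hFN : ∀ k, N < k → F k = 0 := fun k hk => sum_eq_zero fun s hs =>
    blockDiagonal'_pow_mul_mul_pow_eq_zero hw hE fun i j hij => by
      have := hd i j hij
      have := mem_range.mp hs
      omega
  have hmul (X : Matrix (Σ i, m i) (Σ i, m i) R) (n : ℕ) : X * (n : Matrix _ _ R) = (n : R) • X :=
    by rw [← Nat.cast_comm, ← nsmul_eq_mul, Nat.cast_smul_eq_nsmul]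
  have hexp : ∀ X : Matrix (Σ i, m i) (Σ i, m i) R,
      (1 + X) ^ M = ∑ k ∈ range (M + 1), X ^ k * (M.choose k : Matrix _ _ R) := fun X => by
    simp [add_comm 1 X, (Commute.one_right X).add_pow]
  rw [add_assoc, hexp, hexp]
  simp only [add_pow_of_mul_mul_eq_zero hEE, add_mul, sum_add_distrib]
  congr 1
  change ∑ k ∈ range (M + 1), F k * _ = E
  rw [sum_eq_single_of_mem 1 (by simp; omega)]
  · rw [hmul, ← sub_eq_zero]
    simpa [F, sub_smul, Nat.cast_sub hM] using smul_eq_zero_of_mul_eq_bot hKI hM1 hEI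
  · intro k hk hk1
    rw [hmul]
    rcases Nat.lt_or_ge N k with hNk | hkN
    · rw [hFN k hNk, smul_zero]
    · obtain rfl | hk2 : k = 0 ∨ 2 ≤ k := by omega
      · simp [F]
      · exact smul_eq_zero_of_mul_eq_bot hKI (hMk k hk2 hkN) (hFI k)

theorem pow_apply_eq_of_fst_ne {I K : Ideal R} (hIK : I ≤ K) (hKI : K * I = ⊥)
    (hw : ∀ i, w i ^ d i = 0) {N : ℕ} (hd : ∀ i j, i ≠ j → d i + d j ≤ N) {M : ℕ} (hM : 1 ≤ M)
    (hM1 : ((M - 1 : ℕ) : R) ∈ K) (hMk : ∀ k, 2 ≤ k → k ≤ N → (M.choose k : R) ∈ K)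
    {S : Matrix (Σ i, m i) (Σ i, m i) R}
    (hSK : ∀ x y, S x y - blockDiagonal' (fun i => 1 + w i) x y ∈ K)
    (hSI : ∀ x y, x.1 ≠ y.1 → S x y ∈ I) {x y : Σ i, m i} (hxy : x.1 ≠ y.1) :
    (S ^ M) x y = S x y := by
  set D := blockDiagonal' (blockDiag' S)
  set J := blockDiagonal' fun i => 1 + w i
  set E := S - D
  have hJ : J = 1 + blockDiagonal' w := by
    rw [← blockDiagonal'_one, ← blockDiagonal'_add]; rfl
  have hEI : ∀ x y, E x y ∈ I := by
    rintro ⟨i, a⟩ ⟨j, b⟩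
    obtain rfl | hij := eq_or_ne i j
    · simp [E, D, blockDiag'_apply]
    · simpa [E, D, blockDiagonal'_apply_ne _ _ _ hij] using hSI _ _ hij
  have hE : blockDiag' E = 0 := by simp [E, D, blockDiag'_blockDiagonal']
  have hY : ∀ x y, (D - J) x y ∈ K := fun x y => by
    rw [show D - J = (S - J) - E by simp only [E]; abel, sub_apply, sub_apply]
    exact sub_mem (hSK x y) (hIK (hEI x y))
  have hII : I * I = ⊥ := bot_unique (hKI ▸ Ideal.mul_mono_left hIK)
  have key := add_add_pow_add_pow (a := J) (mul_mul_eq_zero_of_mul_eq_bot hII hEI hEI)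
    (mul_mul_eq_zero_of_mul_eq_bot hKI hY hEI)
    (mul_mul_eq_zero_of_mul_eq_bot (mul_comm I K ▸ hKI) hEI hY) M
  rw [add_sub_cancel, add_sub_cancel, hJ, one_add_blockDiagonal'_add_pow hIK hKI hw hd hM hM1 hMk
    hEI hE, ← hJ] at key
  have hSM : S ^ M = D ^ M + E := add_right_cancel (key.trans (by abel))
  rw [hSM, add_apply, ← blockDiagonal'_pow, blockDiagonal'_apply_of_ne _ hxy, zero_add]
  simp [E, D, blockDiagonal'_apply_of_ne _ hxy]

theorem apply_eq_zero_of_fst_ne {I K : Ideal R} (hIK : I ≤ K) (hKI : K * I = ⊥)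
    (hw : ∀ i, w i ^ d i = 0) {N : ℕ} (hd : ∀ i j, i ≠ j → d i + d j ≤ N) {M : ℕ} (hM : 1 ≤ M)
    (hM1 : ((M - 1 : ℕ) : R) ∈ K) (hMk : ∀ k, 2 ≤ k → k ≤ N → (M.choose k : R) ∈ K)
    {q : ∀ i, Matrix (m i) (m i) R} (hq : ∀ i j, i ≠ j → IsCoprime (q i).charpoly (q j).charpoly)
    {S : Matrix (Σ i, m i) (Σ i, m i) R} (hQS : blockDiagonal' q * S = S ^ M * blockDiagonal' q)
    (hSK : ∀ x y, S x y - blockDiagonal' (fun i => 1 + w i) x y ∈ K)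
    (hSI : ∀ x y, x.1 ≠ y.1 → S x y ∈ I) {x y : Σ i, m i} (hxy : x.1 ≠ y.1) : S x y = 0 := by
  obtain ⟨i, a⟩ := x
  obtain ⟨j, b⟩ := y
  have hblock := congrArg (·.submatrix (Sigma.mk i) (Sigma.mk j)) hQS
  have hpow : (S ^ M).submatrix (Sigma.mk i) (Sigma.mk j) = S.submatrix (Sigma.mk i) (Sigma.mk j) :=
    Matrix.ext fun a b => pow_apply_eq_of_fst_ne hIK hKI hw hd hM hM1 hMk hSK hSI hxy
  simp only [submatrix_blockDiagonal'_mul, submatrix_mul_blockDiagonal', hpow] at hblock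
  exact congr_fun₂ (eq_zero_of_mul_eq_mul_of_isCoprime_charpoly (hq i j hxy) hblock) a b

theorem apply_mem_of_fst_ne {I K I' : Ideal R} (hIK : I ≤ K) (hKI : K * I ≤ I')
    (hw : ∀ i, w i ^ d i = 0) {N : ℕ} (hd : ∀ i j, i ≠ j → d i + d j ≤ N) {M : ℕ} (hM : 1 ≤ M)
    (hM1 : ((M - 1 : ℕ) : R) ∈ K) (hMk : ∀ k, 2 ≤ k → k ≤ N → (M.choose k : R) ∈ K)
    {q : ∀ i, Matrix (m i) (m i) R} (hq : ∀ i j, i ≠ j → IsCoprime (q i).charpoly (q j).charpoly)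
    {S : Matrix (Σ i, m i) (Σ i, m i) R} (hQS : blockDiagonal' q * S = S ^ M * blockDiagonal' q)
    (hSK : ∀ x y, S x y - blockDiagonal' (fun i => 1 + w i) x y ∈ K)
    (hSI : ∀ x y, x.1 ≠ y.1 → S x y ∈ I) {x y : Σ i, m i} (hxy : x.1 ≠ y.1) : S x y ∈ I' := by
  set π := Ideal.Quotient.mk I'
  have hπ {J : Ideal R} {r : R} (hr : r ∈ J) : π r ∈ J.map π := Ideal.mem_map_of_mem π hr
  have hblock (p : ∀ i, Matrix (m i) (m i) R) :
      (blockDiagonal' p).map π = blockDiagonal' fun i => (p i).map π :=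
    blockDiagonal'_map p π (map_zero π)
  rw [← Ideal.Quotient.eq_zero_iff_mem]
  refine apply_eq_zero_of_fst_ne (w := fun i => (w i).map π) (q := fun i => (q i).map π)
    (S := S.map π) (Ideal.map_mono hIK) ?_
    (fun i => by rw [← Matrix.map_pow, hw, Matrix.map_zero _ (map_zero π)])
    hd hM (by simpa using hπ hM1) (fun k hk hkN => by simpa using hπ (hMk k hk hkN))
    (fun i j hij => by simpa [charpoly_map] using (hq i j hij).map (mapRingHom π)) ?_ ?_
    (fun x y hxy => hπ (hSI x y hxy)) hxy
  · rw [← Ideal.map_mul, Ideal.map_eq_bot_iff_le_ker, Ideal.mk_ker]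
    exact hKI
  · rw [← hblock, ← Matrix.map_mul, ← Matrix.map_pow, ← Matrix.map_mul, hQS]
  · intro x y
    have h1 : (fun i => 1 + (w i).map π) = fun i => (1 + w i).map π :=
      _root_.funext fun i => by rw [eq_comm, ← RingHom.mapMatrix_apply, map_add, map_one]; rfl
    simpa [h1, ← hblock] using hπ (hSK x y)

theorem apply_eq_zero_of_fst_ne_of_isNilpotent {K : Ideal R} (hK : IsNilpotent K)
    (hw : ∀ i, w i ^ d i = 0) {N : ℕ} (hd : ∀ i j, i ≠ j → d i + d j ≤ N) {M : ℕ} (hM : 1 ≤ M)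
    (hM1 : ((M - 1 : ℕ) : R) ∈ K) (hMk : ∀ k, 2 ≤ k → k ≤ N → (M.choose k : R) ∈ K)
    {q : ∀ i, Matrix (m i) (m i) R} (hq : ∀ i j, i ≠ j → IsCoprime (q i).charpoly (q j).charpoly)
    {S : Matrix (Σ i, m i) (Σ i, m i) R} (hQS : blockDiagonal' q * S = S ^ M * blockDiagonal' q)
    (hSK : ∀ x y, S x y - blockDiagonal' (fun i => 1 + w i) x y ∈ K)
    {x y : Σ i, m i} (hxy : x.1 ≠ y.1) : S x y = 0 := by
  have hpow (j : ℕ) : ∀ x y : Σ i, m i, x.1 ≠ y.1 → S x y ∈ K ^ (j + 1) := by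
    induction j with
    | zero => intro x y h; simpa [blockDiagonal'_apply_of_ne _ h] using hSK x y
    | succ j ih =>
      exact fun x y h => apply_mem_of_fst_ne (Ideal.pow_le_self j.succ_ne_zero)
        (by rw [← pow_succ']) hw hd hM hM1 hMk hq hQS hSK ih h
  obtain ⟨k, hk⟩ := hK
  simpa [hk] using Ideal.pow_le_pow_right k.le_succ (hpow k x y hxy)

end Unipotent

end Matrix

end

theorem inertia_block_diagonal_general
    (l : ℕ) (hl : l.Prime)
    {A : Type*} [CommRing A] [IsArtinianRing A] [IsLocalRing A]
    [CharP (ResidueField A) l]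
    (q : ℕ)
    (f : ℕ)
    {r : ℕ} (n : Fin r → ℕ)
    (N : ℕ) (hsum : ∑ i, n i = N)
    (hval : padicValNat l (N.factorial) < padicValNat l (q ^ f - 1))
    (S P : GL ((i : Fin r) × Fin (n i)) A)
    (hconj : P * S * P⁻¹ = S ^ q)
    -- (i) the reduction of `S` is block diagonal with Jordan blocks `J_{n_i}(1)`
    (hSbar : ∀ x y : (i : Fin r) × Fin (n i),
      residue A ((S : Matrix ((i : Fin r) × Fin (n i)) ((i : Fin r) × Fin (n i)) A) x y)
        = if x.1 = y.1 ∧ ((y.2 : ℕ) = (x.2 : ℕ) ∨ (y.2 : ℕ) = (x.2 : ℕ) + 1) then 1 else 0)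
    -- (ii) `P` is block diagonal
    (hPblock : ∀ x y : (i : Fin r) × Fin (n i), x.1 ≠ y.1 →
      (P : Matrix ((i : Fin r) × Fin (n i)) ((i : Fin r) × Fin (n i)) A) x y = 0)
    -- (iii) the characteristic polynomials of the `f`-th powers of the reduced blocks of `P`
    -- are pairwise coprime
    (hcoprime : ∀ i j : Fin r, i ≠ j →
      IsCoprime
        (Matrix.charpoly ((Matrix.of fun a b : Fin (n i) =>
          residue A ((P : Matrix ((i : Fin r) × Fin (n i)) ((i : Fin r) × Fin (n i)) A) ⟨i, a⟩ ⟨i, b⟩)) ^ f))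
        (Matrix.charpoly ((Matrix.of fun a b : Fin (n j) =>
          residue A ((P : Matrix ((i : Fin r) × Fin (n i)) ((i : Fin r) × Fin (n i)) A) ⟨j, a⟩ ⟨j, b⟩)) ^ f))) :
    ∀ x y : (i : Fin r) × Fin (n i), x.1 ≠ y.1 →
      (S : Matrix ((i : Fin r) × Fin (n i)) ((i : Fin r) × Fin (n i)) A) x y = 0 := by
  have hnil : IsNilpotent (maximalIdeal A) :=
    (isArtinianRing_iff_isNilpotent_maximalIdeal A).mp inferInstance
  have hM : 1 ≤ q ^ f := Nat.one_le_iff_ne_zero.mpr fun h => by simp [h] at hval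
  set Pm : Matrix ((i : Fin r) × Fin (n i)) ((i : Fin r) × Fin (n i)) A := ↑P
  set Sm : Matrix ((i : Fin r) × Fin (n i)) ((i : Fin r) × Fin (n i)) A := ↑S
  have hQS : Matrix.blockDiagonal' (Matrix.blockDiag' Pm ^ f) * Sm =
      Sm ^ q ^ f * Matrix.blockDiagonal' (Matrix.blockDiag' Pm ^ f) := by
    have h := (SemiconjBy.pow_left_of_pow_right (mul_inv_eq_iff_eq_mul.mp hconj) f).map
      (Units.coeHom _)
    rw [Matrix.blockDiagonal'_pow, Matrix.blockDiagonal'_blockDiag'_of_apply_eq_zero hPblock]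
    simpa [SemiconjBy] using h
  intro x y hxy
  refine Matrix.apply_eq_zero_of_fst_ne_of_isNilpotent hnil
    (fun i => Matrix.nilpotentJordanBlock_pow_self (n i)) (fun i j hij => ?_) hM
    (natCast_mem_maximalIdeal_of_dvd (dvd_of_one_le_padicValNat (by omega)))
    (fun k hk hkN => natCast_mem_maximalIdeal_of_dvd
      (hl.dvd_choose_of_padicValNat_factorial_lt hval hk hkN))
    (fun i j hij => ?_) hQS (fun x y => ?_) hxy
  · rw [← hsum, ← Finset.sum_pair hij]
    exact Finset.sum_le_sum_of_subset (Finset.subset_univ _)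
  · refine Polynomial.isCoprime_of_isCoprime_map residue_surjective (ker_residue (R := A) ▸ hnil) ?_
    rw [Pi.pow_apply, Pi.pow_apply, ← Matrix.charpoly_map, ← Matrix.charpoly_map, Matrix.map_pow,
      Matrix.map_pow]
    exact hcoprime i j hij
  · rw [← residue_eq_zero_iff, map_sub, hSbar,
      Matrix.blockDiagonal'_one_add_nilpotentJordanBlock_apply]
    split_ifs <;> simp

/-- Lemma 7.9-type statement: if `Φ Σ Φ⁻¹ = Σ^q`, the reduction of `Σ` is block diagonal with
unipotent Jordan blocks `J_{n_i}(1)`, `Φ` is block diagonal, the characteristic polynomials of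
the `f`-th powers of the reductions of its blocks are pairwise coprime, and
`v_l(q^f - 1) > v_l(n!)`, then `Σ` itself is block diagonal. -/
theorem inertia_block_diagonal
    (l : ℕ) (hl : l.Prime)
    {A : Type*} [CommRing A] [IsArtinianRing A] [IsLocalRing A]
    [CharP (ResidueField A) l]
    (q : ℕ) (hq : 2 ≤ q) (hlq : ¬ l ∣ q)
    (f : ℕ) (hf : 1 ≤ f)
    {r : ℕ} (n : Fin r → ℕ) (hn : ∀ i, 0 < n i)
    (N : ℕ) (hN : 1 ≤ N) (hsum : ∑ i, n i = N)
    (hval : padicValNat l (N.factorial) < padicValNat l (q ^ f - 1))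
    (S P : GL ((i : Fin r) × Fin (n i)) A)
    (hconj : P * S * P⁻¹ = S ^ q)
    -- (i) the reduction of `S` is block diagonal with Jordan blocks `J_{n_i}(1)`
    (hSbar : ∀ x y : (i : Fin r) × Fin (n i),
      residue A ((S : Matrix ((i : Fin r) × Fin (n i)) ((i : Fin r) × Fin (n i)) A) x y)
        = if x.1 = y.1 ∧ ((y.2 : ℕ) = (x.2 : ℕ) ∨ (y.2 : ℕ) = (x.2 : ℕ) + 1) then 1 else 0)
    -- (ii) `P` is block diagonal
    (hPblock : ∀ x y : (i : Fin r) × Fin (n i), x.1 ≠ y.1 →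
      (P : Matrix ((i : Fin r) × Fin (n i)) ((i : Fin r) × Fin (n i)) A) x y = 0)
    -- (iii) the characteristic polynomials of the `f`-th powers of the reduced blocks of `P`
    -- are pairwise coprime
    (hcoprime : ∀ i j : Fin r, i ≠ j →
      IsCoprime
        (Matrix.charpoly ((Matrix.of fun a b : Fin (n i) =>
          residue A ((P : Matrix ((i : Fin r) × Fin (n i)) ((i : Fin r) × Fin (n i)) A) ⟨i, a⟩ ⟨i, b⟩)) ^ f))
        (Matrix.charpoly ((Matrix.of fun a b : Fin (n j) =>
          residue A ((P : Matrix ((i : Fin r) × Fin (n i)) ((i : Fin r) × Fin (n i)) A) ⟨j, a⟩ ⟨j, b⟩)) ^ f))) :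
    ∀ x y : (i : Fin r) × Fin (n i), x.1 ≠ y.1 →
      (S : Matrix ((i : Fin r) × Fin (n i)) ((i : Fin r) × Fin (n i)) A) x y = 0 :=
  inertia_block_diagonal_general l hl q f n N hsum hval S P hconj hSbar hPblock hcoprime
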